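/- Let U be a finite universe and 𝓕 ⊆ 2^U a finite family of subsets of U with U = ⋃𝓕. Construct the simple graph G with vertex set U ∪ {v_F : F ∈ 𝓕} ∪ {x, y} (all new vertices distinct from U), and edge set {{u, v_F} : F ∈ 𝓕, u ∈ F} ∪ {{x, v_F} : F ∈ 𝓕} ∪ {{x, y}}. Then the minimum size of a set cover of (U, 𝓕) equals the minimum size of a dominating set of G minus 1. Moreover, U ∪ {x} is a vertex cover of G. -/

import Mathlib

/-!
A set cover `𝓢` yields the dominating set `{v_F : F ∈ 𝓢} ∪ {x}`, since `x` dominates every `v_F`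
and `y`. Conversely, a dominating set must contain `x` or `y` in order to dominate `y`; trading each
of its vertices `v_F` for `F`, each `u ∈ U` for some set containing `u`, and `x`, `y` for nothing
gives a set cover with fewer elements. Finiteness of the graph comes from `U = ⋃𝓕`.
-/

open SimpleGraph

/-- Vertices of the reduction graph: the universe `U`, a vertex `v_F` for each
    `F ∈ 𝓕`, and two extra vertices `x = inr (inr 0)` and `y = inr (inr 1)`. -/
abbrev SCVertex {α : Type*} (𝓕 : Finset (Finset α)) : Type _ :=
  α ⊕ ({F : Finset α // F ∈ 𝓕} ⊕ Fin 2)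

/-- Adjacency generator for the set-cover reduction: edges `{u, v_F}` for `u ∈ F`,
    edges `{x, v_F}` for all `F ∈ 𝓕`, and the edge `{x, y}`. -/
def scRel {α : Type*} (𝓕 : Finset (Finset α)) : SCVertex 𝓕 → SCVertex 𝓕 → Prop
  | Sum.inl u, Sum.inr (Sum.inl F) => u ∈ F.val
  | Sum.inr (Sum.inl _), Sum.inr (Sum.inr j) => j = 0
  | Sum.inr (Sum.inr i), Sum.inr (Sum.inr j) => i = 0 ∧ j = 1
  | _, _ => False

/-- The reduction graph from `Set Cover` to `Dominating Set`. -/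
def scGraph {α : Type*} (𝓕 : Finset (Finset α)) : SimpleGraph (SCVertex 𝓕) :=
  fromRel (scRel 𝓕)

/-- Minimum size of a dominating set of `G`. -/
noncomputable def minDomSize {V : Type*} (G : SimpleGraph V) : ℕ :=
  sInf {n | ∃ S : Set V, (∀ v : V, v ∈ S ∨ ∃ u ∈ S, G.Adj u v) ∧ S.ncard = n}

/-- Minimum size of a set cover of `(U, 𝓕)`. -/
noncomputable def minSetCoverSize {α : Type*} (𝓕 : Finset (Finset α)) : ℕ :=
  sInf {n | ∃ 𝓢 : Finset (Finset α), 𝓢 ⊆ 𝓕 ∧ (∀ u : α, ∃ F ∈ 𝓢, u ∈ F) ∧ 𝓢.card = n}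

open Sum

def SimpleGraph.IsDominatingSet {V : Type*} (G : SimpleGraph V) (S : Set V) : Prop :=
  ∀ v, v ∈ S ∨ ∃ u ∈ S, G.Adj u v

theorem SimpleGraph.isDominatingSet_univ {V : Type*} (G : SimpleGraph V) :
    G.IsDominatingSet Set.univ :=
  fun _ => Or.inl trivial

theorem minDomSize_le {V : Type*} {G : SimpleGraph V} {S : Set V} (hS : G.IsDominatingSet S) :
    minDomSize G ≤ S.ncard :=
  Nat.sInf_le ⟨S, hS, rfl⟩

theorem exists_isDominatingSet_ncard_eq_minDomSize {V : Type*} (G : SimpleGraph V) :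
    ∃ S : Set V, G.IsDominatingSet S ∧ S.ncard = minDomSize G :=
  Nat.sInf_mem (s := {n | ∃ S : Set V, G.IsDominatingSet S ∧ S.ncard = n})
    ⟨_, Set.univ, G.isDominatingSet_univ, rfl⟩

section SetCover

variable {α : Type*} {𝓕 𝓢 : Finset (Finset α)}

def IsSetCover (𝓕 𝓢 : Finset (Finset α)) : Prop :=
  𝓢 ⊆ 𝓕 ∧ ∀ u, ∃ F ∈ 𝓢, u ∈ F

theorem minSetCoverSize_le (h : IsSetCover 𝓕 𝓢) : minSetCoverSize 𝓕 ≤ 𝓢.card :=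
  Nat.sInf_le ⟨𝓢, h.1, h.2, rfl⟩

theorem exists_isSetCover_card_eq_minSetCoverSize (hcover : ∀ u, ∃ F ∈ 𝓕, u ∈ F) :
    ∃ 𝓢, IsSetCover 𝓕 𝓢 ∧ 𝓢.card = minSetCoverSize 𝓕 := by
  obtain ⟨𝓢, hsub, hcov, hcard⟩ := Nat.sInf_mem (s := {n | ∃ 𝓢 : Finset (Finset α), 𝓢 ⊆ 𝓕 ∧
    (∀ u : α, ∃ F ∈ 𝓢, u ∈ F) ∧ 𝓢.card = n}) ⟨_, 𝓕, subset_rfl, hcover, rfl⟩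
  exact ⟨𝓢, ⟨hsub, hcov⟩, hcard⟩

theorem finite_of_forall_exists_mem (hcover : ∀ u, ∃ F ∈ 𝓕, u ∈ F) : Finite α := by
  refine Set.finite_univ_iff.mp <|
    (𝓕.finite_toSet.biUnion fun F _ => F.finite_toSet).subset fun u _ => ?_
  obtain ⟨F, hF, hu⟩ := hcover u
  exact Set.mem_biUnion hF hu

end SetCover

section scGraph

variable {α : Type*} (𝓕 : Finset (Finset α))

@[simp]
theorem scGraph_adj_set_inl {F : {F // F ∈ 𝓕}} {u : α} :
    (scGraph 𝓕).Adj (inr (inl F)) (inl u) ↔ u ∈ F.1 := by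
  simp [scGraph, scRel]

theorem scGraph_adj_inl_iff {w : SCVertex 𝓕} {u : α} :
    (scGraph 𝓕).Adj w (inl u) ↔ ∃ F : {F // F ∈ 𝓕}, w = inr (inl F) ∧ u ∈ F.1 := by
  rcases w with _ | F | i <;> simp [scGraph, scRel]

theorem scGraph_adj_y_iff {w : SCVertex 𝓕} :
    (scGraph 𝓕).Adj w (inr (inr 1)) ↔ w = inr (inr 0) := by
  rcases w with _ | F | i <;> simp [scGraph, scRel]
  omega

theorem scGraph_adj_x_set (F : {F // F ∈ 𝓕}) :
    (scGraph 𝓕).Adj (inr (inr 0)) (inr (inl F)) := by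
  simp [scGraph, scRel]

theorem isVertexCover_scGraph :
    (scGraph 𝓕).IsVertexCover (Set.range inl ∪ {inr (inr 0)}) := by
  intro a b h
  rw [scGraph, fromRel_adj] at h
  rcases a with _ | F | i <;> rcases b with _ | G | j <;> simp_all [scRel]
  omega

theorem exists_isDominatingSet_card_of_isSetCover {𝓢 : Finset (Finset α)} (h : IsSetCover 𝓕 𝓢) :
    ∃ D : Finset (SCVertex 𝓕), (scGraph 𝓕).IsDominatingSet D ∧ D.card = 𝓢.card + 1 := by
  classical
  let setVertex : {F // F ∈ 𝓕} ↪ SCVertex 𝓕 := Function.Embedding.inl.trans .inr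
  refine ⟨insert (inr (inr 0)) ((𝓢.subtype (· ∈ 𝓕)).map setVertex), ?_, ?_⟩
  · rintro (u | F | i)
    · obtain ⟨F, hF, hu⟩ := h.2 u
      exact Or.inr ⟨inr (inl ⟨F, h.1 hF⟩), by simp [setVertex, hF], by simpa⟩
    · exact Or.inr ⟨_, by simp, scGraph_adj_x_set 𝓕 F⟩
    · fin_cases i
      · exact Or.inl (by simp)
      · exact Or.inr ⟨_, by simp, (scGraph_adj_y_iff 𝓕).2 rfl⟩
  · rw [Finset.card_insert_of_notMem (by simp [setVertex]), Finset.card_map, Finset.card_subtype,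
      Finset.filter_true_of_mem h.1]

def coveringSet (c : α → Finset α) : SCVertex 𝓕 → Finset α
  | inl u => c u
  | inr (inl F) => F.1
  | inr (inr _) => ∅

theorem coveringSet_mem_or_eq_empty {c : α → Finset α} (hc : ∀ u, c u ∈ 𝓕) (v : SCVertex 𝓕) :
    coveringSet 𝓕 c v ∈ 𝓕 ∨ coveringSet 𝓕 c v = ∅ := by
  rcases v with u | F | i
  exacts [Or.inl (hc u), Or.inl F.2, Or.inr rfl]

theorem exists_isSetCover_card_lt_of_isDominatingSet (hcover : ∀ u, ∃ F ∈ 𝓕, u ∈ F)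
    {D : Finset (SCVertex 𝓕)} (hD : (scGraph 𝓕).IsDominatingSet D) :
    ∃ 𝓢, IsSetCover 𝓕 𝓢 ∧ 𝓢.card < D.card := by
  classical
  choose c hc𝓕 hc using hcover
  obtain ⟨i, hi⟩ : ∃ i, inr (inr i) ∈ D := by
    rcases hD (inr (inr 1)) with h | ⟨w, hw, hadj⟩
    · exact ⟨1, h⟩
    · exact ⟨0, (scGraph_adj_y_iff 𝓕).1 hadj ▸ hw⟩
  have hempty : ∅ ∈ D.image (coveringSet 𝓕 c) := Finset.mem_image_of_mem _ hi
  refine ⟨(D.image (coveringSet 𝓕 c)).erase ∅, ⟨fun F hF => ?_, fun u => ?_⟩, ?_⟩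
  · obtain ⟨hne, v, -, rfl⟩ : F ≠ ∅ ∧ ∃ v ∈ D, coveringSet 𝓕 c v = F := by simpa using hF
    exact (coveringSet_mem_or_eq_empty 𝓕 hc𝓕 v).resolve_right hne
  · obtain ⟨v, hv, hu⟩ : ∃ v ∈ D, u ∈ coveringSet 𝓕 c v := by
      rcases hD (inl u) with h | ⟨w, hw, hadj⟩
      · exact ⟨inl u, h, hc u⟩
      · obtain ⟨F, rfl, hu⟩ := (scGraph_adj_inl_iff 𝓕).1 hadj
        exact ⟨_, hw, hu⟩
    exact ⟨_, Finset.mem_erase.2 ⟨Finset.ne_empty_of_mem hu, Finset.mem_image_of_mem _ hv⟩, hu⟩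
  · have := Finset.card_image_le (s := D) (f := coveringSet 𝓕 c)
    have := Finset.card_pos.2 ⟨_, hi⟩
    rw [Finset.card_erase_of_mem hempty]
    omega

end scGraph

theorem stmt7_general {α : Type*} (𝓕 : Finset (Finset α))
    (hcover : ∀ u : α, ∃ F ∈ 𝓕, u ∈ F) :
    minDomSize (scGraph 𝓕) = minSetCoverSize 𝓕 + 1 ∧
    (∀ a b : SCVertex 𝓕, (scGraph 𝓕).Adj a b →
      a ∈ Set.range Sum.inl ∪ {Sum.inr (Sum.inr 0)} ∨
      b ∈ Set.range Sum.inl ∪ {Sum.inr (Sum.inr 0)}) := by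
  have : Finite α := finite_of_forall_exists_mem hcover
  refine ⟨le_antisymm ?_ ?_, fun a b h => isVertexCover_scGraph 𝓕 h⟩
  · obtain ⟨𝓢, h𝓢, hcard⟩ := exists_isSetCover_card_eq_minSetCoverSize hcover
    obtain ⟨D, hD, hDcard⟩ := exists_isDominatingSet_card_of_isSetCover 𝓕 h𝓢
    calc minDomSize (scGraph 𝓕) ≤ (D : Set (SCVertex 𝓕)).ncard := minDomSize_le hD
      _ = minSetCoverSize 𝓕 + 1 := by rw [Set.ncard_coe_finset, hDcard, hcard]
  · obtain ⟨S, hS, hcard⟩ := exists_isDominatingSet_ncard_eq_minDomSize (scGraph 𝓕)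
    lift S to Finset (SCVertex 𝓕) using S.toFinite
    obtain ⟨𝓢, h𝓢, hlt⟩ := exists_isSetCover_card_lt_of_isDominatingSet 𝓕 hcover hS
    have := minSetCoverSize_le h𝓢
    rw [← hcard, Set.ncard_coe_finset]
    omega

/-- If `U = ⋃𝓕`, the minimum size of a set cover of `(U, 𝓕)` equals the minimum size
    of a dominating set of the reduction graph minus 1; moreover `U ∪ {x}` is a vertex
    cover of the reduction graph. -/
theorem stmt7 {α : Type*} [Fintype α] (𝓕 : Finset (Finset α))
    (hcover : ∀ u : α, ∃ F ∈ 𝓕, u ∈ F) :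
    minDomSize (scGraph 𝓕) = minSetCoverSize 𝓕 + 1 ∧
    (∀ a b : SCVertex 𝓕, (scGraph 𝓕).Adj a b →
      a ∈ Set.range Sum.inl ∪ {Sum.inr (Sum.inr 0)} ∨
      b ∈ Set.range Sum.inl ∪ {Sum.inr (Sum.inr 0)}) :=
  stmt7_general 𝓕 hcover
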